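/- Let (X,μ) be a measure space, 0<q≤∞ and J ⊆ (0,∞) with m_J = inf J > 0 and M_J = sup J < ∞. Then IL_{J,q}(X,μ) ⊆ L_{m_J,q}(X,μ) ∩ L_{M_J,q}(X,μ), and moreover for every f ∈ IL_{J,q}(X,μ), ‖f‖_{L_{m_J,q}} ≤ sup_{p∈J} ‖f‖_{L_{p,q}} and ‖f‖_{L_{M_J,q}} ≤ sup_{p∈J} ‖f‖_{L_{p,q}}. -/

import Mathlib

open MeasureTheory Set ENNReal

noncomputable section

variable {X : Type*} [MeasurableSpace X]

/-- The distribution function `d_f(α) = μ {x : |f x| > α}`. -/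
def distFun (μ : Measure X) (f : X → ℝ) (α : ℝ) : ℝ≥0∞ :=
  μ {x | α < |f x|}

/-- The decreasing rearrangement `f*(t) = inf {s > 0 : d_f(s) ≤ t}`, with `inf ∅ = ∞`. -/
def rearr (μ : Measure X) (f : X → ℝ) (t : ℝ) : ℝ≥0∞ :=
  ⨅ (s : ℝ) (_ : 0 < s ∧ distFun μ f s ≤ ENNReal.ofReal t), ENNReal.ofReal s

/-- The Lorentz quasi-norm `‖f‖_{L_{p,q}}` (for `q = ∞` the weak norm `sup_t t^{1/p} f*(t)`). -/
def lorentzNorm (μ : Measure X) (f : X → ℝ) (p q : ℝ≥0∞) : ℝ≥0∞ :=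
  if q = ∞ then ⨆ t ∈ Ioi (0 : ℝ), ENNReal.ofReal t ^ (1 / p).toReal * rearr μ f t
  else (∫⁻ t in Ioi (0 : ℝ),
      (ENNReal.ofReal t ^ (1 / p).toReal * rearr μ f t) ^ q.toReal / ENNReal.ofReal t) ^
      (1 / q.toReal)

/-- The Lorentz space `L_{p,q}(X, μ)`, as the set of measurable functions with
finite Lorentz quasi-norm. -/
def Lorentz (μ : Measure X) (p q : ℝ≥0∞) : Set (X → ℝ) :=
  {f | Measurable f ∧ lorentzNorm μ f p q < ∞}

/-- `IL_{J,q}(X,μ)`: functions in every `L_{p,q}`, `p ∈ J`, with uniformly bounded norms. -/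
def ILJq (μ : Measure X) (J : Set ℝ≥0∞) (q : ℝ≥0∞) : Set (X → ℝ) :=
  {f | (∀ p ∈ J, f ∈ Lorentz μ p q) ∧ (⨆ p ∈ J, lorentzNorm μ f p q) < ∞}

/-! The Lorentz norm is lower semicontinuous in the exponent `p` on `(0, ∞]`: for fixed `t > 0`
the integrand `t ^ (1/p) f*(t)` is continuous in `p`, and Fatou's lemma passes to the integral
(for `q = ∞`, the supremum of continuous functions is lower semicontinuous). Since `inf J` and
`sup J` lie in the closure of `J`, their norms are bounded by `sup_{p ∈ J} ‖f‖_{L_{p,q}}`. -/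

open Filter Topology

lemma rearr_antitone (μ : Measure X) (f : X → ℝ) : Antitone (rearr μ f) :=
  fun _ _ h => le_iInf₂ fun s hs => iInf₂_le s ⟨hs.1, hs.2.trans (ENNReal.ofReal_le_ofReal h)⟩

lemma continuousAt_ofReal_rpow_toReal_one_div {t : ℝ} (ht : 0 < t) {p₀ : ℝ≥0∞} (hp₀ : p₀ ≠ 0) :
    ContinuousAt (fun p : ℝ≥0∞ => ENNReal.ofReal t ^ (1 / p).toReal) p₀ := by
  have h_exp : ContinuousAt (fun p : ℝ≥0∞ => (1 / p).toReal) p₀ := by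
    simp only [one_div]
    exact (ENNReal.continuousAt_toReal (ENNReal.inv_ne_top.2 hp₀)).comp
      continuous_inv.continuousAt
  simp only [ENNReal.ofReal_rpow_of_pos ht]
  exact ENNReal.continuous_ofReal.continuousAt.comp
    ((Real.continuousAt_const_rpow ht.ne').comp h_exp)

lemma lowerSemicontinuousAt_lorentzNorm (μ : Measure X) (f : X → ℝ) (q : ℝ≥0∞)
    {p₀ : ℝ≥0∞} (hp₀ : p₀ ≠ 0) : LowerSemicontinuousAt (fun p => lorentzNorm μ f p q) p₀ := by
  set g : ℝ≥0∞ → ℝ → ℝ≥0∞ := fun p t => ENNReal.ofReal t ^ (1 / p).toReal * rearr μ f t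
  have hg : ∀ t ∈ Ioi (0 : ℝ), Tendsto (g · t) (𝓝 p₀) (𝓝 (g p₀ t)) := fun t ht =>
    ENNReal.Tendsto.mul_const (continuousAt_ofReal_rpow_toReal_one_div ht hp₀)
      (Or.inl (ENNReal.rpow_pos (ENNReal.ofReal_pos.2 ht) ENNReal.ofReal_ne_top).ne')
  rw [lowerSemicontinuousAt_iff_le_liminf]
  by_cases hq : q = ∞
  · simp only [lorentzNorm, if_pos hq]
    refine iSup₂_le fun t ht => ?_
    show g p₀ t ≤ liminf (fun p => ⨆ t ∈ Ioi (0 : ℝ), g p t) (𝓝 p₀)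
    exact (hg t ht).liminf_eq ▸
      liminf_le_liminf (Eventually.of_forall fun p => le_biSup (g p) ht)
  · simp only [lorentzNorm, if_neg hq]
    set F : ℝ≥0∞ → ℝ → ℝ≥0∞ := fun p t => g p t ^ q.toReal / ENNReal.ofReal t
    have hF_meas : ∀ p, Measurable (F p) := fun p =>
      ((((ENNReal.continuous_rpow_const.measurable.comp ENNReal.measurable_ofReal).mul
        (rearr_antitone μ f).measurable)).pow_const _).div ENNReal.measurable_ofReal
    have hF : ∀ t ∈ Ioi (0 : ℝ), Tendsto (F · t) (𝓝 p₀) (𝓝 (F p₀ t)) := fun t ht =>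
      ENNReal.Tendsto.div_const ((ENNReal.continuous_rpow_const.tendsto _).comp (hg t ht))
        (Or.inr (ENNReal.ofReal_pos.2 ht).ne')
    have fatou :
        ∫⁻ t in Ioi (0 : ℝ), F p₀ t ≤ liminf (fun p => ∫⁻ t in Ioi (0 : ℝ), F p t) (𝓝 p₀) :=
      calc ∫⁻ t in Ioi (0 : ℝ), F p₀ t
          = ∫⁻ t in Ioi (0 : ℝ), liminf (F · t) (𝓝 p₀) :=
            setLIntegral_congr_fun measurableSet_Ioi fun t ht => (hF t ht).liminf_eq.symm
        _ ≤ _ := lintegral_liminf_le hF_meas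
    have h_exp : (0 : ℝ) ≤ 1 / q.toReal := by positivity
    calc (∫⁻ t in Ioi (0 : ℝ), F p₀ t) ^ (1 / q.toReal)
        ≤ (liminf (fun p => ∫⁻ t in Ioi (0 : ℝ), F p t) (𝓝 p₀)) ^ (1 / q.toReal) :=
          ENNReal.rpow_le_rpow fatou h_exp
      _ = liminf (fun p => (∫⁻ t in Ioi (0 : ℝ), F p t) ^ (1 / q.toReal)) (𝓝 p₀) :=
          (ENNReal.monotone_rpow_of_nonneg h_exp).map_liminf_of_continuousAt _
            ENNReal.continuous_rpow_const.continuousAt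

lemma lorentzNorm_le_biSup_of_mem_closure (μ : Measure X) (f : X → ℝ) (q : ℝ≥0∞)
    {J : Set ℝ≥0∞} {p₀ : ℝ≥0∞} (hp₀J : p₀ ∈ closure J) (hp₀ : p₀ ≠ 0) :
    lorentzNorm μ f p₀ q ≤ ⨆ p ∈ J, lorentzNorm μ f p q :=
  (lowerSemicontinuousAt_lorentzNorm μ f q hp₀).le_liminf.trans <| liminf_le_of_frequently_le' <|
    (mem_closure_iff_frequently.1 hp₀J).mono fun _ hp => le_biSup (lorentzNorm μ f · q) hp

theorem stmt10_general (μ : Measure X) (q : ℝ≥0∞) (J : Set ℝ≥0∞)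
    (hJne : J.Nonempty) (hm : 0 < sInf J) :
    ILJq μ J q ⊆ Lorentz μ (sInf J) q ∩ Lorentz μ (sSup J) q ∧
    ∀ f ∈ ILJq μ J q,
      lorentzNorm μ f (sInf J) q ≤ (⨆ p ∈ J, lorentzNorm μ f p q) ∧
      lorentzNorm μ f (sSup J) q ≤ (⨆ p ∈ J, lorentzNorm μ f p q) := by
  have hM : sSup J ≠ 0 := (hm.trans_le (sInf_le_sSup hJne)).ne'
  have bound : ∀ f : X → ℝ,
      lorentzNorm μ f (sInf J) q ≤ (⨆ p ∈ J, lorentzNorm μ f p q) ∧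
      lorentzNorm μ f (sSup J) q ≤ (⨆ p ∈ J, lorentzNorm μ f p q) := fun f =>
    ⟨lorentzNorm_le_biSup_of_mem_closure μ f q (sInf_mem_closure hJne) hm.ne',
      lorentzNorm_le_biSup_of_mem_closure μ f q (sSup_mem_closure hJne) hM⟩
  refine ⟨fun f hf => ?_, fun f _ => bound f⟩
  obtain ⟨p₁, hp₁⟩ := hJne
  have hf_meas : Measurable f := (hf.1 p₁ hp₁).1
  exact ⟨⟨hf_meas, (bound f).1.trans_lt hf.2⟩, ⟨hf_meas, (bound f).2.trans_lt hf.2⟩⟩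

/-- `IL_{J,q} ⊆ L_{m_J,q} ∩ L_{M_J,q}` with `‖f‖_{L_{m_J,q}}, ‖f‖_{L_{M_J,q}} ≤ sup_{p∈J} ‖f‖_{L_{p,q}}`. -/
theorem stmt10 (μ : Measure X) (q : ℝ≥0∞) (hq : 0 < q) (J : Set ℝ≥0∞)
    (hJne : J.Nonempty) (hJ : J ⊆ Ioo 0 ∞) (hm : 0 < sInf J) (hM : sSup J ≠ ∞) :
    ILJq μ J q ⊆ Lorentz μ (sInf J) q ∩ Lorentz μ (sSup J) q ∧
    ∀ f ∈ ILJq μ J q,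
      lorentzNorm μ f (sInf J) q ≤ (⨆ p ∈ J, lorentzNorm μ f p q) ∧
      lorentzNorm μ f (sSup J) q ≤ (⨆ p ∈ J, lorentzNorm μ f p q) :=
  stmt10_general μ q J hJne hm
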